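/- Let μ : M₂(ℤ) → M₂(ℤ) be a map such that μ(AB) = μ(A)μ(B) for all A, B ∈ M₂(ℤ) and μ(diag(a,b)) = diag(1, ab) for all a, b ∈ ℤ. Then μ(A) = diag(1, det A) for all A ∈ M₂(ℤ). -/

import Mathlib

/-!
Since `μ 0 = diag(1, 0)` absorbs every `μ A` on both sides, `μ A = diag(1, d A)` for a
multiplicative `d : M₂(ℤ) → ℤ` with `d (diag(a, b)) = a b`. Such a `d` is trivial on
`SL(2, ℤ)`: `d T` is a unit with `2 d T = 2 (d T)²` (from `T diag(1, 2) = diag(1, 2) T²`),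
and then `S² = (ST)³ = -1` forces `d S = 1`. Every integer matrix is an `SL(2, ℤ)`-multiple
of an upper triangular one (Bézout on its first column), and
`!![a, b; 0, e] = diag(1, e) Tᵇ diag(a, 1)`.
-/

open Matrix ModularGroup
open scoped MatrixGroups

local notation "M₂" => Matrix (Fin 2) (Fin 2) ℤ

namespace Matrix

lemma eq_diagonal_one_of_mul_diagonal_one_zero {R : Type*} [Semiring R]
    {X : Matrix (Fin 2) (Fin 2) R} (h₁ : X * diagonal ![1, 0] = diagonal ![1, 0])
    (h₂ : diagonal ![1, 0] * X = diagonal ![1, 0]) :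
    X = diagonal ![1, X 1 1] := by
  have e00 := congrFun₂ h₁ 0 0
  have e10 := congrFun₂ h₁ 1 0
  have e01 := congrFun₂ h₂ 0 1
  simp only [mul_diagonal, diagonal_mul] at e00 e10 e01
  ext i j; fin_cases i <;> fin_cases j <;> simp_all

lemma exists_SL2Z_mul_apply_one_zero (A : M₂) : ∃ g : SL(2, ℤ), ((g : M₂) * A) 1 0 = 0 := by
  by_cases h : Int.gcd (A 0 0) (A 1 0) = 0
  · exact ⟨1, by simpa using (Int.gcd_eq_zero_iff.mp h).2⟩
  obtain ⟨k, a, c, -, hac, ha, hc⟩ := Int.exists_gcd_one' (Nat.pos_of_ne_zero h)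
  have hcop : IsCoprime (-c) a := (Int.isCoprime_iff_gcd_eq_one.mpr hac).symm.neg_left
  obtain ⟨g, -, hg⟩ :=
    bottom_row_surj (R := ℤ) (show ![-c, a] ∈ {cd | IsCoprime (cd 0) (cd 1)} from hcop)
  refine ⟨g, ?_⟩
  have hg0 : (g : M₂) 1 0 = -c := congrFun hg 0
  have hg1 : (g : M₂) 1 1 = a := congrFun hg 1
  rw [mul_apply, Fin.sum_univ_two, hg0, hg1, ha, hc]
  ring

section

variable (d : M₂ →* ℤ) (hdiag : ∀ a b, d (diagonal ![a, b]) = a * b)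
include hdiag

lemma map_T_eq_one : d T = 1 := by
  have hrel : (T : M₂) * diagonal ![1, 2] = diagonal ![1, 2] * ((T : M₂) * (T : M₂)) := by
    ext i j; fin_cases i <;> fin_cases j <;> simp
  have h := congrArg d hrel
  simp only [map_mul, hdiag] at h
  have hT : d T ≠ 0 := left_ne_zero_of_mul_eq_one (b := d ↑(T⁻¹)) <| by
    rw [← map_mul, ← SpecialLinearGroup.coe_mul, mul_inv_cancel, SpecialLinearGroup.coe_one,
      map_one]
  exact mul_left_cancel₀ hT (by linarith)

lemma map_S_eq_one : d S = 1 := by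
  have hneg : d (-1) = 1 := by
    rw [show (-1 : M₂) = diagonal ![-1, -1] by decide, hdiag]; rfl
  have hsq : d S ^ 2 = 1 := by rw [sq, ← map_mul, S_mul_S_eq, hneg]
  have hcube : (S * T : M₂) ^ 3 = -1 := by decide
  have h3 : d S ^ 3 = 1 := by
    simpa only [map_pow, map_mul, map_T_eq_one d hdiag, mul_one, hneg] using congrArg d hcube
  calc d S = d S * d S ^ 2 := by rw [hsq, mul_one]
  _ = d S ^ 3 := by ring
  _ = 1 := h3

lemma map_coe_SL2Z_eq_one (g : SL(2, ℤ)) : d g = 1 := by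
  let χ : SL(2, ℤ) →* ℤˣ := (Units.map d).comp SpecialLinearGroup.toGL
  have hχ : χ = 1 := by
    refine MonoidHom.eq_of_eqOn_dense SpecialLinearGroup.SL2Z_generators ?_
    rintro _ (rfl | rfl) <;> ext
    exacts [map_S_eq_one d hdiag, map_T_eq_one d hdiag]
  exact congrArg Units.val (DFunLike.congr_fun hχ g)

lemma map_upperTriangular (a b e : ℤ) : d !![a, b; 0, e] = a * e := by
  have h : !![a, b; 0, e] = diagonal ![1, e] * (T ^ b : SL(2, ℤ)) * diagonal ![a, 1] := by
    rw [coe_T_zpow]; ext i j; fin_cases i <;> fin_cases j <;> simp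
  rw [h, map_mul, map_mul, map_coe_SL2Z_eq_one d hdiag, hdiag, hdiag]
  ring

theorem eq_detMonoidHom_of_map_diagonal : d = detMonoidHom := by
  ext A
  obtain ⟨g, hg⟩ := exists_SL2Z_mul_apply_one_zero A
  calc d A = d (g * A) := by rw [map_mul, map_coe_SL2Z_eq_one d hdiag, one_mul]
  _ = det ((g : M₂) * A) := by
    rw [eta_fin_two ((g : M₂) * A), hg, map_upperTriangular d hdiag, det_fin_two_of]
    ring
  _ = det A := by rw [det_mul, SpecialLinearGroup.det_coe, one_mul]

end

end Matrix

theorem stmt15 (μ : Matrix (Fin 2) (Fin 2) ℤ → Matrix (Fin 2) (Fin 2) ℤ)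
    (hmul : ∀ A B : Matrix (Fin 2) (Fin 2) ℤ, μ (A * B) = μ A * μ B)
    (hdiag : ∀ a b : ℤ, μ (Matrix.diagonal ![a, b]) = Matrix.diagonal ![1, a * b]) :
    ∀ A : Matrix (Fin 2) (Fin 2) ℤ, μ A = Matrix.diagonal ![1, A.det] := by
  have hzero : μ 0 = diagonal ![1, 0] := by
    rw [show (0 : M₂) = diagonal ![0, 0] by decide, hdiag, mul_zero]
  have hform (A : M₂) : μ A = diagonal ![1, μ A 1 1] :=
    eq_diagonal_one_of_mul_diagonal_one_zero (by rw [← hzero, ← hmul, mul_zero])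
      (by rw [← hzero, ← hmul, zero_mul])
  let d : M₂ →* ℤ :=
    { toFun A := μ A 1 1
      map_one' := by rw [show (1 : M₂) = diagonal ![1, 1] by decide, hdiag]; rfl
      map_mul' A B := by rw [hmul, hform A, hform B]; simp }
  have hd : d = detMonoidHom := eq_detMonoidHom_of_map_diagonal d fun a b => by
    simpa [d] using congrFun₂ (hdiag a b) 1 1
  intro A
  rw [hform A, ← coe_detMonoidHom, ← hd]
  rfl
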